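/- Assume in addition that ν_ψ is shift-invariant (its pull-back under Φ is σ-invariant). Let β : ℝ → ℝ satisfy P(tφ + β(t)·(ψ − αφ)) = 0 for all t ∈ ℝ, and assume β is differentiable at α. Then β'(α) = −(∫φ dν_ψ)/(∫(ψ − αφ) dν_ψ) = 1/(α − ∫ψ dν_ψ/∫φ dν_ψ); consequently the tangent line to the graph of β at the point (α, 1) intersects the x-axis at x = ∫ψ dν_ψ/∫φ dν_ψ. -/

import Mathlib

open Set Filter MeasureTheory Topology
open scoped ENNReal NNReal

noncomputable section

/-- A conformal iterated function system on a compact interval `X = [x₀, x₁] ⊂ ℝ`: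
finitely many (`d + 1`, with `d ≥ 1`) differentiable contractions mapping `X` into its
interior, satisfying the Hölder condition (each `f a` extends to a `C^{1+ε}`
diffeomorphism of an open interval `Y = (y₀, y₁) ⊃ X` onto its image, with `f a '' Y ⊆ Y`)
and the strong separation condition. -/
structure CIFS where
  d : ℕ
  one_le_d : 1 ≤ d
  x₀ : ℝ
  x₁ : ℝ
  x_lt : x₀ < x₁
  y₀ : ℝ
  y₁ : ℝ
  y₀_lt : y₀ < x₀
  y₁_gt : x₁ < y₁
  f : Fin (d + 1) → ℝ → ℝ
  maps_X : ∀ a, MapsTo (f a) (Icc x₀ x₁) (Ioo x₀ x₁)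
  r : ℝ
  r_pos : 0 < r
  r_lt_one : r < 1
  contr : ∀ a, ∀ u ∈ Icc x₀ x₁, ∀ v ∈ Icc x₀ x₁, |f a u - f a v| ≤ r * |u - v|
  maps_Y : ∀ a, MapsTo (f a) (Ioo y₀ y₁) (Ioo y₀ y₁)
  injOn_Y : ∀ a, InjOn (f a) (Ioo y₀ y₁)
  diff_Y : ∀ a, ∀ x ∈ Ioo y₀ y₁, DifferentiableAt ℝ (f a) x
  deriv_ne : ∀ a, ∀ x ∈ Ioo y₀ y₁, deriv (f a) x ≠ 0
  ε : NNReal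
  ε_pos : 0 < ε
  ε_le_one : ε ≤ 1
  hc : NNReal
  holder : ∀ a, HolderOnWith hc ε (deriv (f a)) (Ioo y₀ y₁)
  sep : ∀ a b, a ≠ b → Disjoint (f a '' Icc x₀ x₁) (f b '' Icc x₀ x₁)

namespace CIFS

/-- the compact interval `X`. -/
def X (S : CIFS) : Set ℝ := Icc S.x₀ S.x₁

/-- `fw ω = f_{x₁} ∘ ⋯ ∘ f_{x_n}` for the word `ω = x₁…x_n`. -/
def fw (S : CIFS) : List (Fin (S.d + 1)) → ℝ → ℝ
  | [] => id
  | a :: ω => S.f a ∘ fw S ω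

/-- the limit set `L = ⋂ n ⋃_{|ω| = n} f_ω(X)`. -/
def L (S : CIFS) : Set ℝ :=
  ⋂ n : ℕ, ⋃ ω ∈ {ω : List (Fin (S.d + 1)) | ω.length = n}, S.fw ω '' S.X

/-- the initial word `x₁…x_n` of a code `x = (x₁x₂…)` (here `x j` is the letter `x_{j+1}`). -/
def code (S : CIFS) (x : ℕ → Fin (S.d + 1)) (n : ℕ) : List (Fin (S.d + 1)) :=
  (List.range n).map x

/-- the coding map `Φ`: sends a code `x` to the unique point of `⋂ n, f_{x₁…x_n}(X)`
(this intersection is a singleton, so we may take its supremum). -/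
def Φ (S : CIFS) (x : ℕ → Fin (S.d + 1)) : ℝ :=
  sSup (⋂ n : ℕ, S.fw (S.code x n) '' S.X)

/-- the cylinder set `[ω] ⊆ L` of a word `ω`. -/
def cyl (S : CIFS) (ω : List (Fin (S.d + 1))) : Set ℝ :=
  S.Φ '' {x | S.code x ω.length = ω}

/-- the left shift on code space. -/
def shift (S : CIFS) (x : ℕ → Fin (S.d + 1)) : ℕ → Fin (S.d + 1) := fun n => x (n + 1)

/-- the Birkhoff sum `S_n g (ξ)` of `g : L → ℝ` evaluated at the point `ξ` with code `x`. -/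
def birk (S : CIFS) (g : ℝ → ℝ) (n : ℕ) (x : ℕ → Fin (S.d + 1)) : ℝ :=
  ∑ k ∈ Finset.range n, g (S.Φ fun j => x (j + k))

/-- the code of a point of `L` (a choice of inverse of the coding map `Φ`). -/
def codeOf (S : CIFS) (ξ : ℝ) : ℕ → Fin (S.d + 1) := Function.invFun S.Φ ξ

/-- the geometric potential `φ(ξ) = log |f'_{x₁}(Φ(σξ))|` for `ξ = (x₁x₂…) ∈ L`. -/
def geom (S : CIFS) : ℝ → ℝ := fun ξ =>
  Real.log |deriv (S.f (S.codeOf ξ 0)) (S.Φ (S.shift (S.codeOf ξ)))|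

/-- the `n`-th approximant `(1/n) log Σ_{|ω| = n} exp (sup_{ξ ∈ [ω]} S_n g(ξ))`
of the topological pressure. -/
def presSeq (S : CIFS) (g : ℝ → ℝ) (n : ℕ) : ℝ :=
  Real.log (∑ ω : Fin n → Fin (S.d + 1),
      Real.exp (sSup (S.birk g n '' {x : ℕ → Fin (S.d + 1) | ∀ i : Fin n, x i.1 = ω i}))) / n

/-- `P(g) = p` : the defining limit of the topological pressure exists and equals `p`. -/
def HasPressure (S : CIFS) (g : ℝ → ℝ) (p : ℝ) : Prop :=
  Tendsto (S.presSeq g) atTop (nhds p)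

/-- Hölder continuity on the limit set. -/
def HolderOn (S : CIFS) (g : ℝ → ℝ) : Prop :=
  ∃ c e : NNReal, 0 < e ∧ HolderOnWith c e g S.L

/-- the standing assumptions on the potential `ψ` (for the exponent `α`):
`ψ` is Hölder continuous, `ψ < 0`, `P(ψ) = 0` and `ψ > αφ` on `L`. -/
def GoodPotential (S : CIFS) (α : ℝ) (ψ : ℝ → ℝ) : Prop :=
  S.HolderOn ψ ∧ (∀ ξ ∈ S.L, ψ ξ < 0) ∧ S.HasPressure ψ 0 ∧
    ∀ ξ ∈ S.L, α * S.geom ξ < ψ ξ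

/-- the Gibbs property of the measure `ν` for the potential `ψ`. -/
def IsGibbs (S : CIFS) (ψ : ℝ → ℝ) (ν : Measure ℝ) : Prop :=
  ∃ c : ℝ, 1 ≤ c ∧ ∀ n : ℕ, ∀ x : ℕ → Fin (S.d + 1),
    c⁻¹ * Real.exp (S.birk ψ n x) ≤ (ν (S.cyl (S.code x n))).toReal ∧
      (ν (S.cyl (S.code x n))).toReal ≤ c * Real.exp (S.birk ψ n x)

/-- the set `E` of codes which are eventually constant equal to `0` or to `1`;
`L* = L \ Φ(E)`. -/
def Ecode (S : CIFS) : Set (ℕ → Fin (S.d + 1)) :=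
  {x | ∃ i : Fin (S.d + 1), (i = 0 ∨ i = 1) ∧ ∃ n : ℕ, ∀ k ≥ n, x k = i}

/-- the code `x` has an `i`-block of length `k` at the `n`-th level:
`x_n ≠ i`, `x_{n+k+1} ≠ i` and `x_{n+m} = i` for `1 ≤ m ≤ k`
(recall `x j` is the letter `x_{j+1}`). -/
def HasBlock (S : CIFS) (x : ℕ → Fin (S.d + 1)) (i : Fin (S.d + 1)) (k n : ℕ) : Prop :=
  x (n - 1) ≠ i ∧ x (n + k) ≠ i ∧ ∀ m : ℕ, 1 ≤ m → m ≤ k → x (n + m - 1) = i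

/-- the labelling convention: `f 0 (X)` is the leftmost and `f 1 (X)` the rightmost
interval of the first level. -/
def Labeled (S : CIFS) : Prop :=
  (∀ a : Fin (S.d + 1), a ≠ 0 → ∀ u ∈ S.f 0 '' S.X, ∀ v ∈ S.f a '' S.X, u < v) ∧
  (∀ a : Fin (S.d + 1), a ≠ 1 → ∀ u ∈ S.f 1 '' S.X, ∀ v ∈ S.f a '' S.X, v < u)

end CIFS

/-- the distribution function `F(t) = ν((-∞, t])` of a measure `ν`. -/
def distFun (ν : Measure ℝ) : ℝ → ℝ := fun t => (ν (Iic t)).toReal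

/-- the `α`-Hölder difference quotient `|F(ξ) - F(η)| / |ξ - η|^α`. -/
def hquot (F : ℝ → ℝ) (α ξ η : ℝ) : ℝ := |F ξ - F η| / |ξ - η| ^ α

/-- the `α`-Hölder derivative of `F` at `ξ` exists in `[0,∞]` and equals `ℓ`. -/
def HolderDerivAt (F : ℝ → ℝ) (α ξ : ℝ) (ℓ : ℝ≥0∞) : Prop :=
  Tendsto (fun η => ENNReal.ofReal (hquot F α ξ η)) (nhdsWithin ξ {ξ}ᶜ) (nhds ℓ)

/-- the set `Λ_ψ^α` of points of `L` where the `α`-Hölder derivative of the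
distribution function of the Gibbs measure `ν = ν_ψ` does not exist in `[0,∞]`. -/
def CIFS.Lambda (S : CIFS) (ψ : ℝ → ℝ) (α : ℝ) (ν : Measure ℝ) : Set ℝ :=
  {ξ ∈ S.L | ¬∃ ℓ : ℝ≥0∞, HolderDerivAt (distFun ν) α ξ ℓ}

/-!
Pull `ν` back along the coding map to a shift-invariant Gibbs measure `μ` on code space.
Comparing the `μ`-weights of the level-`n` cylinders with their Gibbs bounds and applying
Jensen's inequality to `log` gives `∫ (g - ψ) dν ≤ P(g)` for every potential `g` (the easy half
of the variational principle, the entropy of `μ` being `-∫ψ dμ`). For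
`g_t = tφ + β(t)(ψ - αφ)` this says that
`F(t) = (t - α) ∫φ dν + (β(t) - 1) ∫(ψ - αφ) dν ≤ 0` for all `t`. Moreover `β(α) = 1`, since
`P(ψ + s(ψ - αφ)) < 0 = P(ψ)` for `s < 0`, so `F(α) = 0`: `F` is maximal at `α` and
`F'(α) = ∫φ dν + β'(α) ∫(ψ - αφ) dν = 0`. As `∫φ dν < 0 < ∫(ψ - αφ) dν`, the three formulas
follow by algebra.
-/

open Function

theorem Real.sum_mul_sub_log_le_log_sum_exp {ι : Type*} (s : Finset ι) {w : ι → ℝ} (m : ι → ℝ)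
    (hw : ∀ i ∈ s, 0 < w i) (hw1 : ∑ i ∈ s, w i = 1) :
    ∑ i ∈ s, w i * (m i - Real.log (w i)) ≤ Real.log (∑ i ∈ s, Real.exp (m i)) := by
  have jensen := strictConcaveOn_log_Ioi.concaveOn.le_map_sum (fun i hi => (hw i hi).le) hw1
    (p := fun i => Real.exp (m i) / w i) fun i hi => div_pos (Real.exp_pos _) (hw i hi)
  calc ∑ i ∈ s, w i * (m i - Real.log (w i))
      = ∑ i ∈ s, w i • Real.log (Real.exp (m i) / w i) := Finset.sum_congr rfl fun i hi => by
        rw [smul_eq_mul, Real.log_div (Real.exp_ne_zero _) (hw i hi).ne', Real.log_exp]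
    _ ≤ Real.log (∑ i ∈ s, w i • (Real.exp (m i) / w i)) := jensen
    _ = Real.log (∑ i ∈ s, Real.exp (m i)) := by
        congr 1
        exact Finset.sum_congr rfl fun i hi => by rw [smul_eq_mul, mul_div_cancel₀ _ (hw i hi).ne']

theorem MeasureTheory.integral_le_log_sum_exp {α ι : Type*} [MeasurableSpace α] [Fintype ι]
    {μ : Measure α} [IsProbabilityMeasure μ] {C : ι → Set α} (hC : ∀ i, MeasurableSet (C i))
    (hdisj : Pairwise (Disjoint on C)) (hcover : ⋃ i, C i = univ) (hpos : ∀ i, 0 < μ.real (C i))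
    {f : α → ℝ} (hf : Integrable f μ) {m : ι → ℝ}
    (hfm : ∀ i, ∀ x ∈ C i, f x ≤ m i - Real.log (μ.real (C i))) :
    ∫ x, f x ∂μ ≤ Real.log (∑ i, Real.exp (m i)) := by
  have hw1 : ∑ i, μ.real (C i) = 1 := by
    rw [← measureReal_iUnion_fintype hdisj hC, hcover, probReal_univ]
  calc ∫ x, f x ∂μ = ∑ i, ∫ x in C i, f x ∂μ := by
        rw [← integral_iUnion_fintype hC hdisj fun i => hf.integrableOn, hcover, setIntegral_univ]
    _ ≤ ∑ i, ∫ _ in C i, (m i - Real.log (μ.real (C i))) ∂μ :=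
        Finset.sum_le_sum fun i _ =>
          setIntegral_mono_on hf.integrableOn (integrable_const _).integrableOn (hC i) (hfm i)
    _ = ∑ i, μ.real (C i) * (m i - Real.log (μ.real (C i))) := by
        simp only [setIntegral_const, smul_eq_mul]
    _ ≤ Real.log (∑ i, Real.exp (m i)) :=
        Real.sum_mul_sub_log_le_log_sum_exp _ m (fun i _ => hpos i) hw1

theorem Real.log_sum_exp_le_log_sum_exp_add {ι : Type*} {s : Finset ι} (hs : s.Nonempty)
    {a b : ι → ℝ} {t : ℝ} (hab : ∀ i ∈ s, a i ≤ b i + t) :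
    Real.log (∑ i ∈ s, Real.exp (a i)) ≤ Real.log (∑ i ∈ s, Real.exp (b i)) + t := by
  have hpos {c : ι → ℝ} : 0 < ∑ i ∈ s, Real.exp (c i) :=
    Finset.sum_pos (fun _ _ => Real.exp_pos _) hs
  rw [← Real.log_exp t, ← Real.log_mul hpos.ne' (Real.exp_ne_zero t), Finset.sum_mul]
  exact Real.log_le_log hpos (Finset.sum_le_sum fun i hi => by
    rw [← Real.exp_add]
    exact Real.exp_le_exp.2 (hab i hi))

theorem Continuous.integrable_of_compactSpace {X : Type*} [TopologicalSpace X] [CompactSpace X]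
    [MeasurableSpace X] [OpensMeasurableSpace X] {μ : Measure X} [IsFiniteMeasure μ]
    {f : X → ℝ} (hf : Continuous f) : Integrable f μ :=
  (BoundedContinuousFunction.mkOfCompact ⟨f, hf⟩).integrable μ

theorem deriv_eq_neg_div_of_forall_le {f : ℝ → ℝ} {x₀ y₀ a b : ℝ} (hb : b ≠ 0)
    (hf : DifferentiableAt ℝ f x₀) (hx₀ : f x₀ = y₀)
    (hle : ∀ x, (x - x₀) * a + (f x - y₀) * b ≤ 0) : deriv f x₀ = -a / b := by
  have hmax : IsLocalMax (fun x => (x - x₀) * a + (f x - y₀) * b) x₀ :=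
    Eventually.of_forall fun x => by simpa [hx₀] using hle x
  have hlin : HasDerivAt (fun x => (x - x₀) * a) a x₀ := by
    simpa using ((hasDerivAt_id x₀).sub_const x₀).mul_const a
  have hcrit := hmax.hasDerivAt_eq_zero (hlin.add ((hf.hasDerivAt.sub_const y₀).mul_const b))
  rw [eq_div_iff hb]
  linarith

section WordCylinder

variable {A : Type*}

def wordCylinder (n : ℕ) (ω : Fin n → A) : Set (ℕ → A) := {x | ∀ i : Fin n, x i = ω i}

lemma mem_wordCylinder_self (x : ℕ → A) (n : ℕ) : x ∈ wordCylinder n fun i => x i :=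
  fun _ => rfl

lemma wordCylinder_eq_iInter (n : ℕ) (ω : Fin n → A) :
    wordCylinder n ω = ⋂ i : Fin n, (fun x : ℕ → A => x i) ⁻¹' {ω i} := by
  ext x
  simp [wordCylinder]

lemma isOpen_wordCylinder [TopologicalSpace A] [DiscreteTopology A] (n : ℕ) (ω : Fin n → A) :
    IsOpen (wordCylinder n ω) := by
  rw [wordCylinder_eq_iInter]
  exact isOpen_iInter_of_finite fun i => (continuous_apply _).isOpen_preimage _ (isOpen_discrete _)

lemma measurableSet_wordCylinder [MeasurableSpace A] [MeasurableSingletonClass A] (n : ℕ)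
    (ω : Fin n → A) : MeasurableSet (wordCylinder n ω) := by
  rw [wordCylinder_eq_iInter]
  exact MeasurableSet.iInter fun i => measurable_pi_apply _ (measurableSet_singleton _)

lemma wordCylinder_nonempty [Inhabited A] (n : ℕ) (ω : Fin n → A) :
    (wordCylinder n ω).Nonempty :=
  ⟨fun j => if h : j < n then ω ⟨j, h⟩ else default, fun i => dif_pos i.isLt⟩

lemma pairwise_disjoint_wordCylinder (n : ℕ) : Pairwise (Disjoint on wordCylinder (A := A) n) :=
  fun _ _ hne => Set.disjoint_left.2 fun _ hx hx' =>
    hne (funext fun i => (hx i).symm.trans (hx' i))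

lemma iUnion_wordCylinder (n : ℕ) : ⋃ ω, wordCylinder (A := A) n ω = univ :=
  eq_univ_of_forall fun x => mem_iUnion.2 ⟨_, mem_wordCylinder_self x n⟩

end WordCylinder

namespace CIFS

variable (S : CIFS)

lemma X_subset_Ioo : S.X ⊆ Ioo S.y₀ S.y₁ := fun _ hx =>
  ⟨S.y₀_lt.trans_le hx.1, hx.2.trans_lt S.y₁_gt⟩

lemma mapsTo_f (a : Fin (S.d + 1)) : MapsTo (S.f a) S.X S.X := fun _ hx =>
  Ioo_subset_Icc_self (S.maps_X a hx)

lemma continuousOn_f (a : Fin (S.d + 1)) : ContinuousOn (S.f a) S.X := fun x hx =>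
  (S.diff_Y a x (S.X_subset_Ioo hx)).continuousAt.continuousWithinAt

lemma mapsTo_fw (ω : List (Fin (S.d + 1))) : MapsTo (S.fw ω) S.X S.X := by
  induction ω with
  | nil => exact mapsTo_id _
  | cons a ω ih => exact (S.mapsTo_f a).comp ih

lemma continuousOn_fw (ω : List (Fin (S.d + 1))) : ContinuousOn (S.fw ω) S.X := by
  induction ω with
  | nil => exact continuousOn_id
  | cons a ω ih => exact (S.continuousOn_f a).comp ih (S.mapsTo_fw ω)

lemma isCompact_image_fw (ω : List (Fin (S.d + 1))) : IsCompact (S.fw ω '' S.X) :=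
  isCompact_Icc.image_of_continuousOn (S.continuousOn_fw ω)

lemma abs_fw_sub_fw_le (ω : List (Fin (S.d + 1))) {u v : ℝ} (hu : u ∈ S.X) (hv : v ∈ S.X) :
    |S.fw ω u - S.fw ω v| ≤ S.r ^ ω.length * |u - v| := by
  induction ω with
  | nil => simp [fw]
  | cons a ω ih =>
    calc |S.f a (S.fw ω u) - S.f a (S.fw ω v)| ≤ S.r * |S.fw ω u - S.fw ω v| :=
          S.contr a _ (S.mapsTo_fw ω hu) _ (S.mapsTo_fw ω hv)
      _ ≤ S.r * (S.r ^ ω.length * |u - v|) := mul_le_mul_of_nonneg_left ih S.r_pos.le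
      _ = S.r ^ (a :: ω).length * |u - v| := by rw [List.length_cons]; ring

lemma abs_sub_le_of_mem_image_fw {ω : List (Fin (S.d + 1))} {p q : ℝ}
    (hp : p ∈ S.fw ω '' S.X) (hq : q ∈ S.fw ω '' S.X) :
    |p - q| ≤ S.r ^ ω.length * (S.x₁ - S.x₀) := by
  obtain ⟨u, hu, rfl⟩ := hp
  obtain ⟨v, hv, rfl⟩ := hq
  refine (S.abs_fw_sub_fw_le ω hu hv).trans
    (mul_le_mul_of_nonneg_left ?_ (pow_nonneg S.r_pos.le _))
  rw [abs_sub_le_iff]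
  constructor <;> linarith [hu.1, hu.2, hv.1, hv.2]

lemma tendsto_pow_mul_length_X : Tendsto (fun n : ℕ => S.r ^ n * (S.x₁ - S.x₀)) atTop (𝓝 0) := by
  simpa using (tendsto_pow_atTop_nhds_zero_of_lt_one S.r_pos.le S.r_lt_one).mul_const
    (S.x₁ - S.x₀)

lemma code_length (x : ℕ → Fin (S.d + 1)) (n : ℕ) : (S.code x n).length = n := by
  simp [code]

lemma code_zero (x : ℕ → Fin (S.d + 1)) : S.code x 0 = [] := rfl

lemma code_succ (x : ℕ → Fin (S.d + 1)) (n : ℕ) : S.code x (n + 1) = S.code x n ++ [x n] := by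
  simp [code, List.range_succ]

lemma code_succ_eq_cons (x : ℕ → Fin (S.d + 1)) (n : ℕ) :
    S.code x (n + 1) = x 0 :: S.code (S.shift x) n := by
  simp only [code, List.range_succ_eq_map, List.map_cons, List.map_map]
  rfl

lemma code_eq_code_iff {x y : ℕ → Fin (S.d + 1)} {n : ℕ} :
    S.code y n = S.code x n ↔ y ∈ wordCylinder n fun i => x i := by
  simp [code, wordCylinder, List.map_inj_left, Fin.forall_iff]

lemma fw_append (ω τ : List (Fin (S.d + 1))) : S.fw (ω ++ τ) = S.fw ω ∘ S.fw τ := by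
  induction ω with
  | nil => rfl
  | cons a ω ih => simp only [List.cons_append, fw, ih, comp_assoc]

lemma image_fw_code_succ_subset (x : ℕ → Fin (S.d + 1)) (n : ℕ) :
    S.fw (S.code x (n + 1)) '' S.X ⊆ S.fw (S.code x n) '' S.X := by
  rw [code_succ, fw_append, image_comp]
  exact image_mono (S.mapsTo_fw _).image_subset

lemma Φ_mem_iInter (x : ℕ → Fin (S.d + 1)) : S.Φ x ∈ ⋂ n, S.fw (S.code x n) '' S.X := by
  have hne : (⋂ n, S.fw (S.code x n) '' S.X).Nonempty :=
    IsCompact.nonempty_iInter_of_sequence_nonempty_isCompact_isClosed _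
      (S.image_fw_code_succ_subset x) (fun _ => (nonempty_Icc.2 S.x_lt.le).image _)
      (S.isCompact_image_fw _) fun _ => (S.isCompact_image_fw _).isClosed
  exact (isClosed_iInter fun _ => (S.isCompact_image_fw _).isClosed).csSup_mem hne
    ((S.isCompact_image_fw (S.code x 0)).bddAbove.mono (iInter_subset _ 0))

lemma Φ_mem_image_fw (x : ℕ → Fin (S.d + 1)) (n : ℕ) : S.Φ x ∈ S.fw (S.code x n) '' S.X :=
  mem_iInter.1 (S.Φ_mem_iInter x) n

lemma Φ_mem_X (x : ℕ → Fin (S.d + 1)) : S.Φ x ∈ S.X := by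
  simpa [code_zero, fw] using S.Φ_mem_image_fw x 0

lemma eq_of_forall_mem_image_fw {x : ℕ → Fin (S.d + 1)} {p q : ℝ}
    (hp : ∀ n, p ∈ S.fw (S.code x n) '' S.X) (hq : ∀ n, q ∈ S.fw (S.code x n) '' S.X) :
    p = q := by
  have h : ∀ n : ℕ, |p - q| ≤ S.r ^ n * (S.x₁ - S.x₀) := fun n => by
    simpa only [S.code_length] using S.abs_sub_le_of_mem_image_fw (hp n) (hq n)
  exact sub_eq_zero.1 (abs_nonpos_iff.1 (ge_of_tendsto' S.tendsto_pow_mul_length_X h))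

lemma Φ_eq_f_Φ_shift (x : ℕ → Fin (S.d + 1)) : S.Φ x = S.f (x 0) (S.Φ (S.shift x)) := by
  refine S.eq_of_forall_mem_image_fw (S.Φ_mem_image_fw x) fun n => ?_
  cases n with
  | zero => simpa [code_zero, fw] using S.mapsTo_f (x 0) (S.Φ_mem_X (S.shift x))
  | succ n =>
    rw [S.code_succ_eq_cons, fw, image_comp]
    exact mem_image_of_mem _ (S.Φ_mem_image_fw (S.shift x) n)

lemma Φ_injective : Injective S.Φ := by
  have head_eq {x y : ℕ → Fin (S.d + 1)} (h : S.Φ x = S.Φ y) : x 0 = y 0 := by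
    by_contra hne
    refine (S.sep _ _ hne).ne_of_mem (mem_image_of_mem _ (S.Φ_mem_X (S.shift x)))
      (mem_image_of_mem _ (S.Φ_mem_X (S.shift y))) ?_
    rw [← S.Φ_eq_f_Φ_shift, ← S.Φ_eq_f_Φ_shift, h]
  have shift_eq {x y : ℕ → Fin (S.d + 1)} (h : S.Φ x = S.Φ y) :
      S.Φ (S.shift x) = S.Φ (S.shift y) := by
    have h0 := head_eq h
    rw [S.Φ_eq_f_Φ_shift x, S.Φ_eq_f_Φ_shift y, h0] at h
    exact S.injOn_Y _ (S.X_subset_Ioo (S.Φ_mem_X _)) (S.X_subset_Ioo (S.Φ_mem_X _)) h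
  intro x y h
  funext n
  induction n generalizing x y with
  | zero => exact head_eq h
  | succ n ih => exact ih (shift_eq h)

lemma continuous_Φ : Continuous S.Φ := by
  refine continuous_iff_continuousAt.2 fun x => Metric.tendsto_nhds.2 fun ε hε => ?_
  obtain ⟨n, hn⟩ := (S.tendsto_pow_mul_length_X.eventually_lt_const hε).exists
  filter_upwards [(isOpen_wordCylinder n fun i => x i).mem_nhds (mem_wordCylinder_self x n)]
    with y hy
  have hyn := S.Φ_mem_image_fw y n
  rw [S.code_eq_code_iff.2 hy] at hyn
  have hdist := S.abs_sub_le_of_mem_image_fw hyn (S.Φ_mem_image_fw x n)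
  rw [S.code_length] at hdist
  exact (Real.dist_eq _ _).trans_le hdist |>.trans_lt hn

lemma Φ_mem_L (x : ℕ → Fin (S.d + 1)) : S.Φ x ∈ S.L :=
  mem_iInter.2 fun n => mem_biUnion (S.code_length x n) (S.Φ_mem_image_fw x n)

lemma code_getD (ω : List (Fin (S.d + 1))) : S.code (fun j => ω.getD j 0) ω.length = ω :=
  List.ext_getElem (S.code_length _ _) fun i _ hi => by simp [code, hi]

lemma range_Φ : range S.Φ = S.L := by
  refine (range_subset_iff.2 S.Φ_mem_L).antisymm fun ξ hξ => ?_
  -- every level-`n` interval containing `ξ` contains a point of `range Φ`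
  have approx : ∀ n : ℕ, ∃ x, |S.Φ x - ξ| ≤ S.r ^ n * (S.x₁ - S.x₀) := fun n => by
    obtain ⟨ω, rfl, hξω⟩ := mem_iUnion₂.1 (mem_iInter.1 hξ n)
    have hx := S.Φ_mem_image_fw (fun j => ω.getD j 0) ω.length
    rw [S.code_getD] at hx
    exact ⟨_, S.abs_sub_le_of_mem_image_fw hx hξω⟩
  choose x hx using approx
  rw [← (isCompact_range S.continuous_Φ).isClosed.closure_eq]
  refine mem_closure_of_tendsto (f := fun n => S.Φ (x n)) (b := atTop) ?_
    (Eventually.of_forall fun n => mem_range_self (x n))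
  exact tendsto_iff_dist_tendsto_zero.2 (squeeze_zero (fun _ => dist_nonneg)
    (fun n => (Real.dist_eq _ _).trans_le (hx n)) S.tendsto_pow_mul_length_X)

lemma measurableEmbedding_Φ : MeasurableEmbedding S.Φ :=
  (S.continuous_Φ.isClosedEmbedding S.Φ_injective).measurableEmbedding

lemma continuous_shift : Continuous S.shift :=
  continuous_pi fun n => continuous_apply (n + 1)

lemma geom_Φ (x : ℕ → Fin (S.d + 1)) :
    S.geom (S.Φ x) = Real.log |deriv (S.f (x 0)) (S.Φ (S.shift x))| := by
  simp only [geom, codeOf, leftInverse_invFun S.Φ_injective x]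

lemma continuous_geom_comp_Φ : Continuous fun x => S.geom (S.Φ x) := by
  simp only [geom_Φ]
  have hderiv (a : Fin (S.d + 1)) :
      Continuous fun y => Real.log |deriv (S.f a) (S.Φ (S.shift y))| :=
    (((S.holder a).continuousOn S.ε_pos).abs.log fun z hz =>
      abs_ne_zero.2 (S.deriv_ne a z hz)).comp_continuous (S.continuous_Φ.comp S.continuous_shift)
      fun y => S.X_subset_Ioo (S.Φ_mem_X _)
  have hprod : Continuous fun p : Fin (S.d + 1) × (ℕ → Fin (S.d + 1)) =>
      Real.log |deriv (S.f p.1) (S.Φ (S.shift p.2))| :=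
    continuous_prod_of_discrete_left.2 hderiv
  exact hprod.comp (f := fun x => (x 0, x)) (by fun_prop)

lemma HolderOn.continuous_comp_Φ {S : CIFS} {g : ℝ → ℝ} (hg : S.HolderOn g) :
    Continuous fun x => g (S.Φ x) := by
  obtain ⟨c, e, he, hgL⟩ := hg
  exact (hgL.continuousOn he).comp_continuous S.continuous_Φ S.Φ_mem_L

lemma shift_iterate (k : ℕ) (x : ℕ → Fin (S.d + 1)) : S.shift^[k] x = fun j => x (j + k) := by
  induction k generalizing x with
  | zero => rfl
  | succ k ih => rw [iterate_succ_apply, ih]; rfl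

lemma birk_eq_sum_iterate (g : ℝ → ℝ) (n : ℕ) (x : ℕ → Fin (S.d + 1)) :
    S.birk g n x = ∑ k ∈ Finset.range n, g (S.Φ (S.shift^[k] x)) := by
  simp only [birk, shift_iterate]

lemma birk_sub (g h : ℝ → ℝ) (n : ℕ) (x : ℕ → Fin (S.d + 1)) :
    S.birk (g - h) n x = S.birk g n x - S.birk h n x := by
  simp [birk, Finset.sum_sub_distrib]

variable {S}

lemma continuous_birk {g : ℝ → ℝ} (hg : Continuous fun x => g (S.Φ x)) (n : ℕ) :
    Continuous (S.birk g n) := by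
  simp only [funext (S.birk_eq_sum_iterate g n)]
  exact continuous_finsetSum _ fun k _ => hg.comp (S.continuous_shift.iterate k)

lemma bddAbove_image_birk {g : ℝ → ℝ} (hg : Continuous fun x => g (S.Φ x)) (n : ℕ)
    (s : Set (ℕ → Fin (S.d + 1))) : BddAbove (S.birk g n '' s) :=
  (isCompact_range (continuous_birk hg n)).bddAbove.mono (image_subset_range _ _)

lemma integral_birk {μ : Measure (ℕ → Fin (S.d + 1))} [IsFiniteMeasure μ]
    (hμ : MeasurePreserving S.shift μ μ) {g : ℝ → ℝ} (hg : Continuous fun x => g (S.Φ x))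
    (n : ℕ) : ∫ x, S.birk g n x ∂μ = n * ∫ x, g (S.Φ x) ∂μ := by
  have hinv (k : ℕ) : ∫ x, g (S.Φ (S.shift^[k] x)) ∂μ = ∫ x, g (S.Φ x) ∂μ := by
    conv_rhs => rw [← (hμ.iterate k).map_eq]
    exact (integral_map (hμ.iterate k).measurable.aemeasurable
      hg.aestronglyMeasurable).symm
  simp only [S.birk_eq_sum_iterate]
  rw [integral_finsetSum (f := fun k x => g (S.Φ (S.shift^[k] x))) _ fun k _ =>
      (hg.comp (S.continuous_shift.iterate k)).integrable_of_compactSpace]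
  simp [hinv]

variable (S) in
def IsGibbsWith (ψ : ℝ → ℝ) (μ : Measure (ℕ → Fin (S.d + 1))) (c : ℝ) : Prop :=
  ∀ n x, c⁻¹ * Real.exp (S.birk ψ n x) ≤ μ.real (wordCylinder n fun i => x i) ∧
    μ.real (wordCylinder n fun i => x i) ≤ c * Real.exp (S.birk ψ n x)

lemma IsGibbsWith.integral_birk_sub_le {μ : Measure (ℕ → Fin (S.d + 1))}
    [IsProbabilityMeasure μ] {ψ g : ℝ → ℝ} {c : ℝ} (hc : 0 < c) (hμ : S.IsGibbsWith ψ μ c)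
    (hψ : Continuous fun x => ψ (S.Φ x)) (hg : Continuous fun x => g (S.Φ x)) {n : ℕ}
    (hn : n ≠ 0) : ∫ x, S.birk (g - ψ) n x ∂μ ≤ Real.log c + n * S.presSeq g n := by
  set M : (Fin n → Fin (S.d + 1)) → ℝ := fun ω => sSup (S.birk g n '' wordCylinder n ω)
  have hpos (ω : Fin n → Fin (S.d + 1)) : 0 < μ.real (wordCylinder n ω) := by
    obtain ⟨x, hx⟩ := wordCylinder_nonempty n ω
    obtain rfl : (fun i : Fin n => x i) = ω := funext hx
    exact lt_of_lt_of_le (by positivity) (hμ n x).1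
  have hbound (ω : Fin n → Fin (S.d + 1)) (x) (hx : x ∈ wordCylinder n ω) :
      S.birk (g - ψ) n x ≤ (M ω + Real.log c) - Real.log (μ.real (wordCylinder n ω)) := by
    obtain rfl : (fun i : Fin n => x i) = ω := funext hx
    have hgM : S.birk g n x ≤ M _ := le_csSup (bddAbove_image_birk hg n _) (mem_image_of_mem _ hx)
    have hψlog := Real.log_le_log (hpos _) (hμ n x).2
    rw [Real.log_mul hc.ne' (Real.exp_ne_zero _), Real.log_exp] at hψlog
    rw [S.birk_sub]
    linarith
  have hZ : ∑ ω, Real.exp (M ω + Real.log c) = c * ∑ ω, Real.exp (M ω) := by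
    simp_rw [Real.exp_add, Real.exp_log hc, ← Finset.sum_mul, mul_comm]
  calc ∫ x, S.birk (g - ψ) n x ∂μ ≤ Real.log (∑ ω, Real.exp (M ω + Real.log c)) :=
        integral_le_log_sum_exp (measurableSet_wordCylinder n) (pairwise_disjoint_wordCylinder n)
          (iUnion_wordCylinder n) hpos
          (continuous_birk (hg.sub hψ) n).integrable_of_compactSpace hbound
    _ = Real.log c + n * S.presSeq g n := by
        rw [hZ, Real.log_mul hc.ne' (Finset.sum_pos (fun _ _ => Real.exp_pos _)
          Finset.univ_nonempty).ne', presSeq, mul_div_cancel₀ _ (Nat.cast_ne_zero.2 hn)]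
        rfl

lemma IsGibbsWith.integral_sub_le_of_hasPressure {μ : Measure (ℕ → Fin (S.d + 1))}
    [IsProbabilityMeasure μ] {ψ g : ℝ → ℝ} {c p : ℝ} (hc : 0 < c) (hμ : S.IsGibbsWith ψ μ c)
    (hinv : MeasurePreserving S.shift μ μ) (hψ : Continuous fun x => ψ (S.Φ x))
    (hg : Continuous fun x => g (S.Φ x)) (hpres : S.HasPressure g p) :
    ∫ x, (g (S.Φ x) - ψ (S.Φ x)) ∂μ ≤ p := by
  set U := ∫ x, (g (S.Φ x) - ψ (S.Φ x)) ∂μ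
  have hlim : Tendsto (fun n : ℕ => U - Real.log c / n) atTop (𝓝 U) := by
    simpa using (tendsto_const_div_atTop_nhds_zero_nat (Real.log c)).const_sub U
  refine le_of_tendsto_of_tendsto hlim hpres (eventually_ne_atTop 0 |>.mono fun n hn => ?_)
  have hn' : (0 : ℝ) < n := Nat.cast_pos.2 (Nat.pos_of_ne_zero hn)
  have key : n * U ≤ Real.log c + n * S.presSeq g n := by
    simpa only [integral_birk hinv (g := g - ψ) (hg.sub hψ), Pi.sub_apply] using
      hμ.integral_birk_sub_le hc hψ hg hn
  calc U - Real.log c / n = (n * U - Real.log c) / n := by field_simp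
    _ ≤ S.presSeq g n := by rw [div_le_iff₀ hn']; linarith

lemma exists_pos_le_of_continuous_comp_Φ {f : ℝ → ℝ} (hf : Continuous fun x => f (S.Φ x))
    (hpos : ∀ ξ ∈ S.L, 0 < f ξ) : ∃ δ > 0, ∀ ξ ∈ S.L, δ ≤ f ξ := by
  obtain ⟨x₀, -, hmin⟩ := isCompact_univ.exists_isMinOn univ_nonempty hf.continuousOn
  refine ⟨_, hpos _ (S.Φ_mem_L x₀), fun ξ hξ => ?_⟩
  obtain ⟨x, rfl⟩ := S.range_Φ.symm ▸ hξ
  exact hmin (mem_univ x)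

lemma presSeq_le_presSeq_add {g h : ℝ → ℝ} {s : ℝ} (hh : Continuous fun x => h (S.Φ x))
    (hgh : ∀ ξ ∈ S.L, g ξ ≤ h ξ + s) {n : ℕ} (hn : n ≠ 0) :
    S.presSeq g n ≤ S.presSeq h n + s := by
  have hbirk (x : ℕ → Fin (S.d + 1)) : S.birk g n x ≤ S.birk h n x + n * s := by
    simp only [birk]
    calc ∑ k ∈ Finset.range n, g (S.Φ fun j => x (j + k))
        ≤ ∑ k ∈ Finset.range n, (h (S.Φ fun j => x (j + k)) + s) :=
          Finset.sum_le_sum fun k _ => hgh _ (S.Φ_mem_L _)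
      _ = _ := by simp [Finset.sum_add_distrib]
  have hsup (ω : Fin n → Fin (S.d + 1)) :
      sSup (S.birk g n '' wordCylinder n ω) ≤ sSup (S.birk h n '' wordCylinder n ω) + n * s :=
    csSup_le ((wordCylinder_nonempty n ω).image _) <| forall_mem_image.2 fun x hx =>
      (hbirk x).trans (add_le_add_left (le_csSup (bddAbove_image_birk hh n _)
        (mem_image_of_mem _ hx)) _)
  have hn' : (0 : ℝ) < n := Nat.cast_pos.2 (Nat.pos_of_ne_zero hn)
  have hlog := Real.log_sum_exp_le_log_sum_exp_add Finset.univ_nonempty fun ω _ => hsup ω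
  rw [presSeq, presSeq, div_add' _ _ _ hn'.ne', div_le_div_iff_of_pos_right hn', mul_comm s]
  exact hlog

lemma HasPressure.le_add {g h : ℝ → ℝ} {p q s : ℝ} (hg : S.HasPressure g p)
    (hh : S.HasPressure h q) (hhc : Continuous fun x => h (S.Φ x))
    (hgh : ∀ ξ ∈ S.L, g ξ ≤ h ξ + s) : p ≤ q + s :=
  le_of_tendsto_of_tendsto hg (hh.add_const s)
    (eventually_ne_atTop 0 |>.mono fun _ hn => presSeq_le_presSeq_add hhc hgh hn)

lemma nonneg_of_hasPressure_add_mul {ψ Q : ℝ → ℝ} {p s : ℝ} (hψ : S.HasPressure ψ p)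
    (hψs : S.HasPressure (fun ξ => ψ ξ + s * Q ξ) p) (hψc : Continuous fun x => ψ (S.Φ x))
    (hQc : Continuous fun x => Q (S.Φ x)) (hQ : ∀ ξ ∈ S.L, 0 < Q ξ) : 0 ≤ s := by
  by_contra! hs
  obtain ⟨δ, hδ, hδQ⟩ := exists_pos_le_of_continuous_comp_Φ hQc hQ
  have := hψs.le_add hψ hψc fun ξ hξ =>
    (add_le_add_iff_left (ψ ξ)).2 (mul_le_mul_of_nonpos_left (hδQ ξ hξ) hs.le)
  nlinarith

variable {ν : Measure ℝ}

lemma image_Φ_wordCylinder (x : ℕ → Fin (S.d + 1)) (n : ℕ) :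
    S.Φ '' wordCylinder n (fun i => x i) = S.cyl (S.code x n) := by
  rw [cyl, S.code_length]
  congr 1
  ext y
  exact S.code_eq_code_iff.symm

lemma IsGibbs.exists_isGibbsWith_comap {ψ : ℝ → ℝ} (h : S.IsGibbs ψ ν) :
    ∃ c, 1 ≤ c ∧ S.IsGibbsWith ψ (ν.comap S.Φ) c := by
  obtain ⟨c, hc, hgibbs⟩ := h
  refine ⟨c, hc, fun n x => ?_⟩
  simpa only [measureReal_def, S.measurableEmbedding_Φ.comap_apply, image_Φ_wordCylinder]
    using hgibbs n x

lemma map_comap_Φ (hsupp : ν S.Lᶜ = 0) : (ν.comap S.Φ).map S.Φ = ν := by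
  rw [S.measurableEmbedding_Φ.map_comap, S.range_Φ]
  exact Measure.restrict_eq_self_of_ae_mem (mem_ae_iff.2 hsupp)

lemma isProbabilityMeasure_comap_Φ [IsProbabilityMeasure ν] (hsupp : ν S.Lᶜ = 0) :
    IsProbabilityMeasure (ν.comap S.Φ) := by
  constructor
  simpa [Measure.map_apply S.continuous_Φ.measurable MeasurableSet.univ] using
    congrArg (· univ) (map_comap_Φ hsupp)

lemma integral_comap_Φ (hsupp : ν S.Lᶜ = 0) (f : ℝ → ℝ) :
    ∫ x, f (S.Φ x) ∂ν.comap S.Φ = ∫ ξ, f ξ ∂ν := by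
  rw [← S.measurableEmbedding_Φ.integral_map, map_comap_Φ hsupp]

lemma integrable_of_continuous_comp_Φ [IsProbabilityMeasure ν] (hsupp : ν S.Lᶜ = 0)
    {f : ℝ → ℝ} (hf : Continuous fun x => f (S.Φ x)) : Integrable f ν := by
  have := isProbabilityMeasure_comap_Φ hsupp
  rw [← map_comap_Φ hsupp, S.measurableEmbedding_Φ.integrable_map_iff]
  exact hf.integrable_of_compactSpace

lemma integral_pos_of_forall_mem_L [IsProbabilityMeasure ν] (hsupp : ν S.Lᶜ = 0)
    {f : ℝ → ℝ} (hf : Continuous fun x => f (S.Φ x)) (hpos : ∀ ξ ∈ S.L, 0 < f ξ) :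
    0 < ∫ ξ, f ξ ∂ν := by
  have := isProbabilityMeasure_comap_Φ hsupp
  rw [← integral_comap_Φ hsupp, integral_pos_iff_support_of_nonneg
    (fun x => (hpos _ (S.Φ_mem_L x)).le) hf.integrable_of_compactSpace]
  simp [Function.support, fun x => (hpos _ (S.Φ_mem_L x)).ne']

theorem integral_sub_le_of_hasPressure [IsProbabilityMeasure ν] (hsupp : ν S.Lᶜ = 0)
    {ψ g : ℝ → ℝ} {p : ℝ} (hgibbs : S.IsGibbs ψ ν)
    (hinv : (ν.comap S.Φ).map S.shift = ν.comap S.Φ) (hψ : Continuous fun x => ψ (S.Φ x))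
    (hg : Continuous fun x => g (S.Φ x)) (hpres : S.HasPressure g p) :
    ∫ ξ, (g ξ - ψ ξ) ∂ν ≤ p := by
  have := isProbabilityMeasure_comap_Φ hsupp
  obtain ⟨c, hc, hμ⟩ := hgibbs.exists_isGibbsWith_comap
  rw [← integral_comap_Φ hsupp]
  exact hμ.integral_sub_le_of_hasPressure (zero_lt_one.trans_le hc)
    ⟨S.continuous_shift.measurable, hinv⟩ hψ hg hpres

theorem sub_mul_integral_add_mul_integral_nonpos [IsProbabilityMeasure ν] (hsupp : ν S.Lᶜ = 0)
    {ψ φ β : ℝ → ℝ} {α : ℝ} (hgibbs : S.IsGibbs ψ ν)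
    (hinv : (ν.comap S.Φ).map S.shift = ν.comap S.Φ) (hψ : Continuous fun x => ψ (S.Φ x))
    (hφ : Continuous fun x => φ (S.Φ x))
    (hβ : ∀ t, S.HasPressure (fun ξ => t * φ ξ + β t * (ψ ξ - α * φ ξ)) 0) (t : ℝ) :
    (t - α) * ∫ ξ, φ ξ ∂ν + (β t - 1) * ∫ ξ, (ψ ξ - α * φ ξ) ∂ν ≤ 0 := by
  have hQ : Continuous fun x => ψ (S.Φ x) - α * φ (S.Φ x) := hψ.sub (continuous_const.mul hφ)
  have hg : Continuous fun x => t * φ (S.Φ x) + β t * (ψ (S.Φ x) - α * φ (S.Φ x)) :=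
    (continuous_const.mul hφ).add (continuous_const.mul hQ)
  convert integral_sub_le_of_hasPressure hsupp hgibbs hinv hψ hg (hβ t) using 1
  rw [← integral_const_mul, ← integral_const_mul, ← integral_add
    ((integrable_of_continuous_comp_Φ hsupp hφ).const_mul _)
    ((integrable_of_continuous_comp_Φ (f := fun ξ => ψ ξ - α * φ ξ) hsupp hQ).const_mul _)]
  exact integral_congr_ae (Eventually.of_forall fun ξ => by ring)

lemma one_le_of_hasPressure_zero {ψ φ : ℝ → ℝ} {α b : ℝ} (hψP : S.HasPressure ψ 0)
    (hb : S.HasPressure (fun ξ => α * φ ξ + b * (ψ ξ - α * φ ξ)) 0)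
    (hψ : Continuous fun x => ψ (S.Φ x)) (hφ : Continuous fun x => φ (S.Φ x))
    (hαφψ : ∀ ξ ∈ S.L, α * φ ξ < ψ ξ) : 1 ≤ b := by
  simp_rw [show ∀ ξ, α * φ ξ + b * (ψ ξ - α * φ ξ) = ψ ξ + (b - 1) * (ψ ξ - α * φ ξ)
    from fun ξ => by ring] at hb
  linarith [nonneg_of_hasPressure_add_mul hψP hb hψ (hψ.sub (continuous_const.mul hφ))
    fun ξ hξ => sub_pos.2 (hαφψ ξ hξ)]

end CIFS

/-- The derivative of `β_α` at `α` is `-(∫φ dν_ψ)/(∫(ψ - αφ) dν_ψ)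
= 1/(α - ∫ψ dν_ψ/∫φ dν_ψ)`, and the tangent line to the graph of `β_α` at `(α, 1)`
meets the `x`-axis at `x = ∫ψ dν_ψ/∫φ dν_ψ`. -/
theorem beta_deriv_at_alpha (S : CIFS)
    (α : ℝ) (hα : 0 < α) (ψ : ℝ → ℝ) (hψ : S.GoodPotential α ψ)
    (ν : Measure ℝ) (hprob : IsProbabilityMeasure ν)
    (hsupp : ν S.Lᶜ = 0) (hgibbs : S.IsGibbs ψ ν)
    (hinv : (Measure.comap S.Φ ν).map S.shift = Measure.comap S.Φ ν)
    (β : ℝ → ℝ)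
    (hβ : ∀ t : ℝ, S.HasPressure (fun ξ => t * S.geom ξ + β t * (ψ ξ - α * S.geom ξ)) 0)
    (hdiff : DifferentiableAt ℝ β α) :
    deriv β α = -(∫ ξ, S.geom ξ ∂ν) / ∫ ξ, (ψ ξ - α * S.geom ξ) ∂ν ∧
      deriv β α = 1 / (α - (∫ ξ, ψ ξ ∂ν) / ∫ ξ, S.geom ξ ∂ν) ∧
      1 + deriv β α * ((∫ ξ, ψ ξ ∂ν) / (∫ ξ, S.geom ξ ∂ν) - α) = 0 := by
  obtain ⟨hψHolder, hψneg, hψP, hαφψ⟩ := hψ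
  have hφc := S.continuous_geom_comp_Φ
  have hψc := hψHolder.continuous_comp_Φ
  have hIQ_eq : ∫ ξ, (ψ ξ - α * S.geom ξ) ∂ν = (∫ ξ, ψ ξ ∂ν) - α * ∫ ξ, S.geom ξ ∂ν := by
    rw [integral_sub (CIFS.integrable_of_continuous_comp_Φ hsupp hψc)
      ((CIFS.integrable_of_continuous_comp_Φ hsupp hφc).const_mul α), integral_const_mul]
  set Iφ := ∫ ξ, S.geom ξ ∂ν
  set IQ := ∫ ξ, (ψ ξ - α * S.geom ξ) ∂ν
  have hIφ : Iφ < 0 := by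
    simpa [integral_neg] using CIFS.integral_pos_of_forall_mem_L hsupp hφc.neg fun ξ hξ =>
      neg_pos.2 (neg_of_mul_neg_right ((hαφψ ξ hξ).trans (hψneg ξ hξ)) hα.le)
  have hIQ : 0 < IQ := CIFS.integral_pos_of_forall_mem_L hsupp
    (hψc.sub (continuous_const.mul hφc)) fun ξ hξ => sub_pos.2 (hαφψ ξ hξ)
  have hF := CIFS.sub_mul_integral_add_mul_integral_nonpos hsupp hgibbs hinv hψc hφc hβ
  have hβα : β α = 1 := le_antisymm (by nlinarith [hF α])
    (CIFS.one_le_of_hasPressure_zero hψP (hβ α) hψc hφc hαφψ)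
  have hD : deriv β α = -Iφ / IQ := deriv_eq_neg_div_of_forall_le hIQ.ne' hdiff hβα hF
  have hIφ0 := hIφ.ne
  refine ⟨hD, ?_, ?_⟩
  · rw [show α - (∫ ξ, ψ ξ ∂ν) / Iφ = -IQ / Iφ by field_simp; linarith, one_div_div, div_neg,
      hD, neg_div]
  · rw [show (∫ ξ, ψ ξ ∂ν) / Iφ - α = IQ / Iφ by field_simp; linarith, hD]
    field_simp
    ring
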